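/- Let Y be a real normed space and ι : Y → C(Ω) an injective linear map with ‖ι(g)‖_{C(Ω)} ≤ C_Y ‖g‖_Y for all g ∈ Y, and let K := ι({g ∈ Y : ‖g‖_Y ≤ 1}) be compact in C(Ω). Let Σ ⊆ C(Ω) and δ, μ > 0 with δ ≤ μ², and assume every f ∈ K admits g ∈ Σ ∩ K with ‖f − g‖_{C(Ω)} ≤ δ. Let f ∈ K and w := λ_x(f). Suppose f̂ = ι(ĥ) with ĥ ∈ Y and ι(ĥ) ∈ Σ minimizes the loss: ‖λ_x(ι(ĥ)) − w‖ + μ‖ĥ‖_Y ≤ ‖λ_x(ι(h)) − w‖ + μ‖h‖_Y for every h ∈ Y with ι(h) ∈ Σ. Then, with ε := μ·max(1+μ, C_Y), one has ‖j(f) − j(f̂)‖_X ≤ C_X ε + 2 R(K(w, 2ε))_X. -/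

import Mathlib

/-!
Compare the minimizer `f̂ = ι ĥ` with the competitor `ι h₀ ∈ Σ ∩ K` that is `δ`-close to `f`:
its loss is at most `δ + μ ≤ μ (1 + μ)`, so `f̂` fits the data up to `ε` and `‖ĥ‖_Y ≤ 1 + μ`.
Pulling `ĥ` radially back into the unit ball moves `ι ĥ` by at most `C_Y μ ≤ ε` in `C(Ω)`, and
lands in `K(w, 2ε)`, which also contains `f`. Two points of a set are at most twice its
Chebyshev radius apart, and the remaining distance costs `C_X ε`.
-/

/-- Chebyshev radius in `X` of the image under `J` of a set `S`:
`R(S)_X = inf_{z ∈ X} sup_{f ∈ S} ‖J f - z‖`. -/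
noncomputable def chebRadMap {A X : Type*} [NormedAddCommGroup X]
    (J : A → X) (S : Set A) : ℝ :=
  ⨅ z : X, ⨆ f : S, ‖J (f : A) - z‖

/-- Weighted euclidean norm on `ℝ^m`: `‖v‖ = ( m⁻¹ ∑ v_j² )^{1/2}`. -/
noncomputable def wNorm {m : ℕ} (v : Fin m → ℝ) : ℝ :=
  Real.sqrt ((∑ j, v j ^ 2) / m)

open Bornology Set

section wNorm

variable {m : ℕ}

lemma wNorm_nonneg (v : Fin m → ℝ) : 0 ≤ wNorm v :=
  Real.sqrt_nonneg _

lemma wNorm_eq_norm_div_sqrt (v : Fin m → ℝ) :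
    wNorm v = ‖WithLp.toLp 2 v‖ / Real.sqrt m := by
  rw [wNorm, Real.sqrt_div (by positivity), EuclideanSpace.norm_eq]
  simp only [Real.norm_eq_abs, sq_abs]

lemma wNorm_add_le (u v : Fin m → ℝ) : wNorm (u + v) ≤ wNorm u + wNorm v := by
  rw [wNorm_eq_norm_div_sqrt, wNorm_eq_norm_div_sqrt, wNorm_eq_norm_div_sqrt, ← add_div,
    WithLp.toLp_add]
  gcongr
  exact norm_add_le _ _

lemma wNorm_le_of_forall_abs_le {v : Fin m → ℝ} {c : ℝ} (hc : 0 ≤ c) (h : ∀ j, |v j| ≤ c) :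
    wNorm v ≤ c := by
  refine Real.sqrt_le_iff.2 ⟨hc, div_le_of_le_mul₀ (Nat.cast_nonneg m) (sq_nonneg c) ?_⟩
  calc ∑ j, v j ^ 2 ≤ ∑ _j : Fin m, c ^ 2 :=
        Finset.sum_le_sum fun j _ => sq_abs (v j) ▸ pow_le_pow_left₀ (abs_nonneg _) (h j) 2
    _ = c ^ 2 * m := by simp [mul_comm]

variable {Z : Type*} [TopologicalSpace Z] [CompactSpace Z] (x : Fin m → Z)

lemma wNorm_eval_sub_le_norm (u v : C(Z, ℝ)) :
    wNorm (fun j => u (x j) - v (x j)) ≤ ‖u - v‖ :=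
  wNorm_le_of_forall_abs_le (norm_nonneg _) fun j => (u - v).norm_coe_le_norm (x j)

lemma wNorm_eval_sub_le (u v f : C(Z, ℝ)) :
    wNorm (fun j => u (x j) - f (x j)) ≤ ‖u - v‖ + wNorm (fun j => v (x j) - f (x j)) := by
  calc wNorm (fun j => u (x j) - f (x j))
      = wNorm ((fun j => u (x j) - v (x j)) + fun j => v (x j) - f (x j)) := by
        congr 1; funext j; simp
    _ ≤ _ := (wNorm_add_le _ _).trans (add_le_add_left (wNorm_eval_sub_le_norm x u v) _)

lemma fit_le_and_norm_le_of_loss_le {Y : Type*} [NormedAddCommGroup Y] {u u₀ f : C(Z, ℝ)}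
    {y y₀ : Y} {δ μ : ℝ} (hμ : 0 < μ) (hδμ : δ ≤ μ ^ 2) (hy₀ : ‖y₀‖ ≤ 1) (hu₀ : ‖u₀ - f‖ ≤ δ)
    (hloss : wNorm (fun j => u (x j) - f (x j)) + μ * ‖y‖ ≤
      wNorm (fun j => u₀ (x j) - f (x j)) + μ * ‖y₀‖) :
    wNorm (fun j => u (x j) - f (x j)) ≤ μ * (1 + μ) ∧ ‖y‖ ≤ 1 + μ := by
  have hfit₀ := wNorm_eval_sub_le_norm x u₀ f
  have hreg₀ : μ * ‖y₀‖ ≤ μ := mul_le_of_le_one_right hμ.le hy₀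
  have hfit := wNorm_nonneg fun j => u (x j) - f (x j)
  have hreg := mul_nonneg hμ.le (norm_nonneg y)
  exact ⟨by nlinarith, le_of_mul_le_mul_left (by nlinarith) hμ⟩

end wNorm

lemma norm_sub_le_two_mul_chebRadMap {A X : Type*} [NormedAddCommGroup X] {J : A → X}
    {S : Set A} (hS : IsBounded (J '' S)) {u v : A} (hu : u ∈ S) (hv : v ∈ S) :
    ‖J u - J v‖ ≤ 2 * chebRadMap J S := by
  obtain ⟨C, hC⟩ := isBounded_iff_forall_norm_le.1 hS
  rw [← div_le_iff₀' two_pos]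
  refine le_ciInf fun z => ?_
  have hbdd : BddAbove (range fun a : S => ‖J a - z‖) := by
    refine ⟨C + ‖z‖, ?_⟩
    rintro _ ⟨a, rfl⟩
    exact (norm_sub_le _ _).trans (add_le_add_left (hC _ ⟨a, a.2, rfl⟩) _)
  have hu' := le_ciSup hbdd ⟨u, hu⟩
  have hv' := le_ciSup hbdd ⟨v, hv⟩
  have := norm_sub_le_norm_sub_add_norm_sub (J u) z (J v)
  rw [norm_sub_rev z] at this
  simp only at hu' hv'
  linarith

lemma LinearMap.isBounded_image_of_norm_le {E F : Type*} [NormedAddCommGroup E]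
    [NormedSpace ℝ E] [NormedAddCommGroup F] [NormedSpace ℝ F] (T : E →ₗ[ℝ] F) {C : ℝ}
    (hT : ∀ g, ‖T g‖ ≤ C * ‖g‖) {s : Set E} (hs : IsBounded s) : IsBounded (T '' s) :=
  (T.mkContinuous C hT).lipschitz.isBounded_image hs

lemma exists_norm_le_one_norm_sub_le {E : Type*} [NormedAddCommGroup E] [NormedSpace ℝ E]
    {y : E} {μ : ℝ} (hμ : 0 ≤ μ) (hy : ‖y‖ ≤ 1 + μ) : ∃ z : E, ‖z‖ ≤ 1 ∧ ‖y - z‖ ≤ μ := by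
  rcases le_or_gt ‖y‖ 1 with hy1 | hy1
  · exact ⟨y, hy1, by simpa using hμ⟩
  · have hy0 : ‖y‖ ≠ 0 := by positivity
    refine ⟨‖y‖⁻¹ • y, by simp [norm_smul, hy0], ?_⟩
    calc ‖y - ‖y‖⁻¹ • y‖ = ‖(1 - ‖y‖⁻¹) • y‖ := by rw [sub_smul, one_smul]
      _ = ‖y‖ - 1 := by
        rw [norm_smul, Real.norm_of_nonneg (sub_nonneg.2 (inv_le_one_of_one_le₀ hy1.le)),
          sub_mul, inv_mul_cancel₀ hy0, one_mul]
      _ ≤ μ := by linarith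

theorem stmt_8_general
    {d : ℕ} {Ω : Set (EuclideanSpace ℝ (Fin d))} [CompactSpace Ω]
    {X : Type*} [NormedAddCommGroup X] [NormedSpace ℝ X]
    {Y : Type*} [NormedAddCommGroup Y] [NormedSpace ℝ Y]
    {m : ℕ} (hm : 0 < m) (x : Fin m → Ω)
    (J : C(Ω, ℝ) →ₗ[ℝ] X)
    (CX : ℝ) (hJ : ∀ g : C(Ω, ℝ), ‖J g‖ ≤ CX * ‖g‖)
    (ι : Y →ₗ[ℝ] C(Ω, ℝ))
    (CY : ℝ) (hCY : ∀ g : Y, ‖ι g‖ ≤ CY * ‖g‖)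
    (Sig : Set C(Ω, ℝ)) (δ μ : ℝ) (hμ : 0 < μ) (hδμ : δ ≤ μ ^ 2)
    (happrox : ∀ f ∈ ι '' {g : Y | ‖g‖ ≤ 1},
      ∃ g ∈ Sig ∩ ι '' {g : Y | ‖g‖ ≤ 1}, ‖f - g‖ ≤ δ)
    (f : C(Ω, ℝ)) (hf : f ∈ ι '' {g : Y | ‖g‖ ≤ 1})
    (fhat : Y)
    (hmin : ∀ h : Y, ι h ∈ Sig →
      wNorm (fun j => (ι fhat) (x j) - f (x j)) + μ * ‖fhat‖ ≤
        wNorm (fun j => (ι h) (x j) - f (x j)) + μ * ‖h‖) :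
    ‖J f - J (ι fhat)‖ ≤ CX * (μ * max (1 + μ) CY) +
      2 * chebRadMap (fun u => J u)
        {u ∈ ι '' {g : Y | ‖g‖ ≤ 1} |
          wNorm (fun j => u (x j) - f (x j)) ≤ 2 * (μ * max (1 + μ) CY)} := by
  set M := max (1 + μ) CY
  obtain ⟨_, ⟨hgSig, h0, hh0, rfl⟩, hfg⟩ := happrox f hf
  rw [norm_sub_rev] at hfg
  obtain ⟨hfit, hnorm⟩ := fit_le_and_norm_le_of_loss_le x hμ hδμ hh0 hfg (hmin h0 hgSig)
  obtain ⟨z, hz, hfz⟩ := exists_norm_le_one_norm_sub_le hμ.le hnorm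
  have hclose : ‖ι z - ι fhat‖ ≤ μ * M := by
    calc ‖ι z - ι fhat‖ = ‖ι (fhat - z)‖ := by rw [map_sub, norm_sub_rev]
      _ ≤ M * ‖fhat - z‖ := (hCY _).trans (by gcongr; exact le_max_right _ _)
      _ ≤ μ * M := by rw [mul_comm μ]; gcongr
  have hCX : 0 ≤ CX := by
    have : Nonempty Ω := ⟨x ⟨0, hm⟩⟩
    simpa using (norm_nonneg _).trans (hJ 1)
  have hbdd := J.isBounded_image_of_norm_le hJ (ι.isBounded_image_of_norm_le hCY
    (isBounded_iff_forall_norm_le.2 ⟨1, fun _ => id⟩))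
  have hfS : wNorm (fun j => f (x j) - f (x j)) ≤ 2 * (μ * M) :=
    (wNorm_eval_sub_le_norm x f f).trans (by rw [sub_self, norm_zero]; positivity)
  have hzS := wNorm_eval_sub_le x (ι z) (ι fhat) f
  have hμM : μ * (1 + μ) ≤ μ * M := by gcongr; exact le_max_left _ _
  calc ‖J f - J (ι fhat)‖ ≤ ‖J f - J (ι z)‖ + ‖J (ι z - ι fhat)‖ := by
        rw [map_sub]; exact norm_sub_le_norm_sub_add_norm_sub _ _ _
    _ ≤ 2 * chebRadMap (fun u => J u) _ + CX * (μ * M) :=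
        add_le_add (norm_sub_le_two_mul_chebRadMap (hbdd.subset (image_mono (sep_subset _ _)))
          ⟨hf, hfS⟩ ⟨⟨z, hz, rfl⟩, by linarith⟩)
          ((hJ _).trans (mul_le_mul_of_nonneg_left hclose hCX))
    _ = _ := add_comm _ _

/-- Point-value data, convex model class `K = ι(U(Y)) ⊆ C(Ω)`: a minimizer of
`g ↦ ‖λ_x(g) − w‖ + μ‖g‖_Y` over `Σ` satisfies, with `ε := μ·max(1+μ, C_Y)`,
`‖j(f) − j(f̂)‖_X ≤ C_X ε + 2 R(K(w, 2ε))_X`. -/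
theorem stmt_8
    {d : ℕ} {Ω : Set (EuclideanSpace ℝ (Fin d))} [CompactSpace Ω]
    {X : Type*} [NormedAddCommGroup X] [NormedSpace ℝ X] [CompleteSpace X]
    {Y : Type*} [NormedAddCommGroup Y] [NormedSpace ℝ Y]
    {m : ℕ} (hm : 0 < m) (x : Fin m → Ω)
    (J : C(Ω, ℝ) →ₗ[ℝ] X) (hJinj : Function.Injective J)
    (CX : ℝ) (hJ : ∀ g : C(Ω, ℝ), ‖J g‖ ≤ CX * ‖g‖)
    (ι : Y →ₗ[ℝ] C(Ω, ℝ)) (hι : Function.Injective ι)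
    (CY : ℝ) (hCY : ∀ g : Y, ‖ι g‖ ≤ CY * ‖g‖)
    (hK : IsCompact (ι '' {g : Y | ‖g‖ ≤ 1}))
    (Sig : Set C(Ω, ℝ)) (δ μ : ℝ) (hδ : 0 < δ) (hμ : 0 < μ) (hδμ : δ ≤ μ ^ 2)
    (happrox : ∀ f ∈ ι '' {g : Y | ‖g‖ ≤ 1},
      ∃ g ∈ Sig ∩ ι '' {g : Y | ‖g‖ ≤ 1}, ‖f - g‖ ≤ δ)
    (f : C(Ω, ℝ)) (hf : f ∈ ι '' {g : Y | ‖g‖ ≤ 1})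
    (fhat : Y) (hfhat : ι fhat ∈ Sig)
    (hmin : ∀ h : Y, ι h ∈ Sig →
      wNorm (fun j => (ι fhat) (x j) - f (x j)) + μ * ‖fhat‖ ≤
        wNorm (fun j => (ι h) (x j) - f (x j)) + μ * ‖h‖) :
    ‖J f - J (ι fhat)‖ ≤ CX * (μ * max (1 + μ) CY) +
      2 * chebRadMap (fun u => J u)
        {u ∈ ι '' {g : Y | ‖g‖ ≤ 1} |
          wNorm (fun j => u (x j) - f (x j)) ≤ 2 * (μ * max (1 + μ) CY)} :=
  stmt_8_general hm x J CX hJ ι CY hCY Sig δ μ hμ hδμ happrox f hf fhat hmin
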